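/- arXiv:1701.02400 — 3 statements merged into one kernel-verified Lean document; each statement's English description precedes it below -/
import Mathlib

section
/- Let μ be quasi-infinitely divisible with characteristic triplet (a, ν, γ)_c, where ν has Jordan decomposition ν = ν⁺ - ν⁻. Then for all z ∈ ℝ: (a/2)z² + ∫_ℝ (1 - cos(zx)) ν⁺(dx) ≥ ∫_ℝ (1 - cos(zx)) ν⁻(dx). -/
open MeasureTheory Complex Filter

noncomputable section

/-- Characteristic function of a measure on ℝ. -/
def charFn (μ : Measure ℝ) (z : ℝ) : ℂ := ∫ x, Complex.exp (Complex.I * z * x) ∂μ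

/-- A representation function: bounded, Borel measurable, with (c x - x)/x² → 0 as x → 0. -/
def IsRepFn (c : ℝ → ℝ) : Prop :=
  Measurable c ∧ (∃ M : ℝ, ∀ x, |c x| ≤ M) ∧
    Tendsto (fun x => (c x - x) / x ^ 2) (nhdsWithin 0 {(0:ℝ)}ᶜ) (nhds 0)

/-- The kernel g_c(x,z). -/
def gKer (c : ℝ → ℝ) (x z : ℝ) : ℂ :=
  if x = 0 then -(z:ℂ)^2 / 2
  else (Complex.exp (Complex.I * z * x) - 1 - Complex.I * z * c x) / ((min 1 (x^2) : ℝ) : ℂ)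

/-- Quasi-infinitely divisible w.r.t. c: the characteristic function has a
Lévy–Khintchine type representation with a finite signed measure ζ = ζp - ζm
(given by its Jordan decomposition). -/
def IsQID (c : ℝ → ℝ) (μ : Measure ℝ) : Prop :=
  ∃ γ : ℝ, ∃ ζp ζm : Measure ℝ, IsFiniteMeasure ζp ∧ IsFiniteMeasure ζm ∧
    Measure.MutuallySingular ζp ζm ∧
    ∀ z : ℝ, charFn μ z =
      Complex.exp (Complex.I * γ * z + (∫ x, gKer c x z ∂ζp) - ∫ x, gKer c x z ∂ζm)

/-- Infinitely divisible w.r.t. c: as above with a (positive) finite measure ζ. -/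
def IsID (c : ℝ → ℝ) (μ : Measure ℝ) : Prop :=
  ∃ γ : ℝ, ∃ ζ : Measure ℝ, IsFiniteMeasure ζ ∧
    ∀ z : ℝ, charFn μ z = Complex.exp (Complex.I * γ * z + ∫ x, gKer c x z ∂ζ)

/-- The Lévy–Khintchine integral ∫ (e^{izx} - 1 - izc(x)) dν. -/
def lkInt (c : ℝ → ℝ) (ν : Measure ℝ) (z : ℝ) : ℂ :=
  ∫ x, (Complex.exp (Complex.I * z * x) - 1 - Complex.I * z * c x) ∂ν

/-- μ has characteristic triplet (a, ν, γ) w.r.t. c, where the quasi-Lévy measure ν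
is given by its Jordan decomposition ν = νp - νm. -/
def HasTriplet (c : ℝ → ℝ) (μ : Measure ℝ) (a : ℝ) (νp νm : Measure ℝ) (γ : ℝ) : Prop :=
  Measure.MutuallySingular νp νm ∧ νp {0} = 0 ∧ νm {0} = 0 ∧
  (∫⁻ x, ENNReal.ofReal (min 1 (x^2)) ∂(νp + νm)) < ⊤ ∧
  ∀ z : ℝ, charFn μ z =
    Complex.exp (Complex.I * γ * z - a * z^2 / 2 + lkInt c νp z - lkInt c νm z)

/-!
Since `‖μ̂ z‖ ≤ 1` and `‖exp w‖ = exp (re w)`, the real part of the Lévy–Khintchine exponent is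
nonpositive, and that real part is `-(a/2) z² - ∫ (1 - cos zx) dν⁺ + ∫ (1 - cos zx) dν⁻`.
Taking real parts under the integral sign needs the integrand `e^{izx} - 1 - izc(x)` to be
`ν^±`-integrable: it is bounded, and `O(x²)` at `0` because `c x - x = o(x²)`, so it is dominated
by a multiple of `min 1 x²`, which is `ν^±`-integrable.
-/

open Asymptotics Topology

lemma exists_norm_le_mul_min_one_sq {E : Type*} [SeminormedAddCommGroup E] {g : ℝ → E} {B : ℝ}
    (hB : ∀ x, ‖g x‖ ≤ B) (hg : g =O[𝓝[≠] 0] (fun x : ℝ => x ^ 2)) :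
    ∃ K, ∀ x ≠ 0, ‖g x‖ ≤ K * min 1 (x ^ 2) := by
  obtain ⟨C, hC⟩ := hg.bound
  obtain ⟨δ, hδ, hδC⟩ := Metric.eventually_nhds_iff.1 (eventually_nhdsWithin_iff.1 hC)
  set ε := min δ 1
  have hε : 0 < ε := lt_min hδ one_pos
  have hB0 : 0 ≤ B := (norm_nonneg _).trans (hB 0)
  refine ⟨max C (B / ε ^ 2), fun x hx => ?_⟩
  rcases lt_or_ge |x| ε with hsmall | hlarge
  · have hx1 : x ^ 2 ≤ 1 := by nlinarith [abs_nonneg x, sq_abs x, min_le_right δ 1]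
    have hxδ : dist x 0 < δ := by
      simpa [Real.dist_eq] using hsmall.trans_le (min_le_left _ _)
    calc ‖g x‖ ≤ C * ‖x ^ 2‖ := hδC hxδ hx
      _ = C * min 1 (x ^ 2) := by
        rw [Real.norm_eq_abs, abs_of_nonneg (sq_nonneg x), min_eq_right hx1]
      _ ≤ max C (B / ε ^ 2) * min 1 (x ^ 2) := by gcongr; exact le_max_left _ _
  · have hεx : ε ^ 2 ≤ min 1 (x ^ 2) :=
      le_min (by nlinarith [min_le_right δ 1]) (by nlinarith [sq_abs x])
    calc ‖g x‖ ≤ B := hB x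
      _ = B / ε ^ 2 * ε ^ 2 := by field_simp
      _ ≤ max C (B / ε ^ 2) * min 1 (x ^ 2) := by gcongr; exact le_max_right _ _

lemma integrable_of_bounded_of_isBigO_sq {E : Type*} [NormedAddCommGroup E] {ν : Measure ℝ}
    (h0 : ν {0} = 0) (hν : ∫⁻ x, ENNReal.ofReal (min 1 (x ^ 2)) ∂ν < ⊤) {g : ℝ → E} {B : ℝ}
    (hgm : AEStronglyMeasurable g ν) (hB : ∀ x, ‖g x‖ ≤ B)
    (hg : g =O[𝓝[≠] 0] (fun x : ℝ => x ^ 2)) :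
    Integrable g ν := by
  obtain ⟨K, hK⟩ := exists_norm_le_mul_min_one_sq hB hg
  have hmin : Integrable (fun x : ℝ => min 1 (x ^ 2)) ν :=
    ⟨by fun_prop, (hasFiniteIntegral_iff_ofReal (ae_of_all _ fun x => by positivity)).2 hν⟩
  refine (hmin.const_mul K).mono' hgm ?_
  filter_upwards [measure_eq_zero_iff_ae_notMem.1 h0] with x hx using hK x hx

lemma IsRepFn.isLittleO {c : ℝ → ℝ} (hc : IsRepFn c) :
    (fun x => c x - x) =o[𝓝[≠] 0] (fun x : ℝ => x ^ 2) :=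
  (isLittleO_iff_tendsto' (eventually_nhdsWithin_of_forall fun _ hx hx2 =>
    absurd (pow_eq_zero_iff two_ne_zero |>.1 hx2) hx)).2 hc.2.2

lemma isBigO_exp_I_mul_sub_one_sub (z : ℝ) :
    (fun x : ℝ => cexp (I * z * x) - 1 - I * z * x) =O[𝓝 0] (fun x : ℝ => x ^ 2) := by
  have hlin : Tendsto (fun x : ℝ => I * z * x) (𝓝 0) (𝓝 0) := by
    have hcont : Continuous fun x : ℝ => I * z * x := by fun_prop
    simpa using hcont.tendsto 0
  have hsq : ((fun w : ℂ => w ^ 2) ∘ fun x : ℝ => I * z * x) =O[𝓝 0] (fun x : ℝ => x ^ 2) :=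
    IsBigO.of_bound (z ^ 2) (Eventually.of_forall fun x => by simp [mul_pow])
  refine (((Complex.exp_sub_sum_range_isBigO_pow 2).comp_tendsto hlin).trans hsq).congr_left
    fun x => ?_
  simp [Finset.sum_range_succ, sub_add_eq_sub_sub]

lemma IsRepFn.isBigO_lkIntegrand {c : ℝ → ℝ} (hc : IsRepFn c) (z : ℝ) :
    (fun x : ℝ => cexp (I * z * x) - 1 - I * z * c x) =O[𝓝[≠] 0] (fun x : ℝ => x ^ 2) := by
  have hc' : (fun x => ((c x - x : ℝ) : ℂ)) =O[𝓝[≠] 0] (fun x : ℝ => x ^ 2) :=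
    .of_norm_left (by simpa only [Complex.norm_real] using hc.isLittleO.isBigO.norm_left)
  refine (((isBigO_exp_I_mul_sub_one_sub z).mono nhdsWithin_le_nhds).sub
    (hc'.const_mul_left (I * z))).congr_left fun x => ?_
  push_cast
  ring

lemma norm_lkIntegrand_le {c : ℝ → ℝ} {M : ℝ} (hM : ∀ x, |c x| ≤ M) (z x : ℝ) :
    ‖cexp (I * z * x) - 1 - I * z * c x‖ ≤ 2 + |z| * M := by
  have hexp : ‖cexp (I * z * x)‖ = 1 := by
    rw [mul_assoc, ← ofReal_mul, mul_comm]
    exact norm_exp_ofReal_mul_I _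
  calc ‖cexp (I * z * x) - 1 - I * z * c x‖
      ≤ ‖cexp (I * z * x)‖ + ‖(1 : ℂ)‖ + ‖I * z * c x‖ :=
        (norm_sub_le _ _).trans (add_le_add_left (norm_sub_le _ _) _)
    _ ≤ 2 + |z| * M := by
      rw [hexp, norm_one, norm_mul, norm_mul, norm_I, norm_real, norm_real, one_mul,
        Real.norm_eq_abs, Real.norm_eq_abs]
      gcongr
      · norm_num
      · exact hM x

lemma IsRepFn.integrable_lkIntegrand {c : ℝ → ℝ} (hc : IsRepFn c) (z : ℝ) {ν : Measure ℝ}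
    (h0 : ν {0} = 0) (hν : ∫⁻ x, ENNReal.ofReal (min 1 (x ^ 2)) ∂ν < ⊤) :
    Integrable (fun x : ℝ => cexp (I * z * x) - 1 - I * z * c x) ν := by
  obtain ⟨M, hM⟩ := hc.2.1
  refine integrable_of_bounded_of_isBigO_sq h0 hν ?_ (norm_lkIntegrand_le hM z)
    (hc.isBigO_lkIntegrand z)
  have hcm : Measurable c := hc.1
  fun_prop

lemma IsRepFn.re_lkInt {c : ℝ → ℝ} (hc : IsRepFn c) (z : ℝ) {ν : Measure ℝ}
    (h0 : ν {0} = 0) (hν : ∫⁻ x, ENNReal.ofReal (min 1 (x ^ 2)) ∂ν < ⊤) :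
    (lkInt c ν z).re = -∫ x, (1 - Real.cos (z * x)) ∂ν := by
  rw [lkInt, ← RCLike.re_eq_complex_re, ← integral_re (hc.integrable_lkIntegrand z h0 hν),
    ← integral_neg]
  congr with x
  have : (cexp (I * z * x)).re = Real.cos (z * x) := by
    rw [mul_assoc, ← ofReal_mul, mul_comm, exp_ofReal_mul_I_re]
  simp [this]

lemma norm_charFn_le_one (μ : Measure ℝ) [IsProbabilityMeasure μ] (z : ℝ) : ‖charFn μ z‖ ≤ 1 := by
  convert norm_charFun_le_one (μ := μ) z using 2
  rw [charFn, charFun_apply_real]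
  congr with x
  congr 1
  ring

/-- (a/2)z² + ∫(1-cos zx)dν⁺ ≥ ∫(1-cos zx)dν⁻ for all z. -/
theorem stmt2 (c : ℝ → ℝ) (hc : IsRepFn c) (μ : Measure ℝ) [IsProbabilityMeasure μ]
    (a γ : ℝ) (νp νm : Measure ℝ) (h : HasTriplet c μ a νp νm γ) :
    ∀ z : ℝ, (∫ x, (1 - Real.cos (z * x)) ∂νm) ≤
      a / 2 * z ^ 2 + ∫ x, (1 - Real.cos (z * x)) ∂νp := by
  intro z
  obtain ⟨-, h0p, h0m, hfin, hchar⟩ := h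
  rw [lintegral_add_measure, ENNReal.add_lt_top] at hfin
  have hle := norm_charFn_le_one μ z
  rw [hchar z, norm_exp, Real.exp_le_one_iff] at hle
  have hre : (I * γ * z - a * z ^ 2 / 2 + lkInt c νp z - lkInt c νm z).re
      = -(a * z ^ 2 / 2) + (lkInt c νp z).re - (lkInt c νm z).re := by
    simp [← ofReal_pow]
  rw [hre, hc.re_lkInt z h0p hfin.1, hc.re_lkInt z h0m hfin.2] at hle
  linarith
end
end

section
/- Let μ be quasi-infinitely divisible with characteristic triplet (0, ν, γ)_c (Gaussian variance zero). Then ν⁺(ℝ) ≥ ν⁻(ℝ). In particular, if ν⁺(ℝ) is finite, so is ν⁻(ℝ). -/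
open MeasureTheory Complex Filter

noncomputable section

/-! Since `‖μ̂‖ ≤ 1` and there is no Gaussian part, taking real parts in the Lévy–Khintchine
formula gives `∫ (1 - cos zx) dν⁻ ≤ ∫ (1 - cos zx) dν⁺` for every `z`. Averaging over `z ~ N(0, t)`
turns `1 - cos zx` into `1 - exp (-t x² / 2)`, which increases to `1` off the origin as `t → ∞`;
since `ν^±{0} = 0`, monotone convergence gives `ν⁻(ℝ) ≤ ν⁺(ℝ)`. -/

section

open ProbabilityTheory NNReal Topology

lemma norm_cexp_I_mul_sub_one_sub_le (t : ℝ) : ‖cexp (I * t) - 1 - I * t‖ ≤ 2 * t ^ 2 := by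
  have hIt : ‖I * (t : ℂ)‖ = |t| := by simp
  rcases le_or_gt |t| 1 with ht | ht
  · have := Complex.norm_exp_sub_one_sub_id_le (x := I * t) (by rwa [hIt])
    rw [hIt, sq_abs] at this
    nlinarith [sq_nonneg t]
  · calc ‖cexp (I * t) - 1 - I * t‖ ≤ ‖cexp (I * t) - 1‖ + ‖I * (t : ℂ)‖ := norm_sub_le _ _
      _ ≤ |t| + |t| := by
          rw [hIt]; gcongr; simpa using Real.norm_exp_I_mul_ofReal_sub_one_le (x := t)
      _ ≤ 2 * t ^ 2 := by nlinarith [sq_abs t]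

lemma IsRepFn.exists_abs_sub_le {c : ℝ → ℝ} (hc : IsRepFn c) :
    ∃ K, 0 ≤ K ∧ ∀ x, x ≠ 0 → |x| ≤ 1 → |c x - x| ≤ K * x ^ 2 := by
  obtain ⟨-, ⟨M, hM⟩, hlim⟩ := hc
  obtain ⟨δ, hδ, hsmall⟩ := Metric.tendsto_nhdsWithin_nhds.mp hlim 1 one_pos
  refine ⟨max 1 ((M + 1) / δ ^ 2), zero_le_one.trans (le_max_left _ _), fun x hx0 hx1 => ?_⟩
  have hx2 : 0 < x ^ 2 := by positivity
  rcases lt_or_ge |x| δ with hxδ | hxδ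
  · have h := hsmall (x := x) hx0 (by simpa using hxδ)
    rw [Real.dist_eq, sub_zero, abs_div, abs_of_pos hx2, div_lt_one hx2] at h
    nlinarith [le_max_left 1 ((M + 1) / δ ^ 2)]
  · have hδx : δ ^ 2 ≤ x ^ 2 := by nlinarith [sq_abs x, abs_nonneg x]
    calc |c x - x| ≤ M + 1 := by linarith [abs_sub (c x) x, hM x]
      _ = (M + 1) / δ ^ 2 * δ ^ 2 := by field_simp
      _ ≤ max 1 ((M + 1) / δ ^ 2) * x ^ 2 := by
          gcongr
          exact le_max_right _ _

def levyIntegrand (c : ℝ → ℝ) (z x : ℝ) : ℂ := cexp (I * z * x) - 1 - I * z * c x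

lemma lkInt_eq_integral_levyIntegrand (c : ℝ → ℝ) (ν : Measure ℝ) (z : ℝ) :
    lkInt c ν z = ∫ x, levyIntegrand c z x ∂ν := rfl

lemma IsRepFn.exists_norm_levyIntegrand_le {c : ℝ → ℝ} (hc : IsRepFn c) (z : ℝ) :
    ∃ K, ∀ x, x ≠ 0 → ‖levyIntegrand c z x‖ ≤ K * min 1 (x ^ 2) := by
  obtain ⟨K, hK0, hK⟩ := hc.exists_abs_sub_le
  obtain ⟨M, hM⟩ := hc.2.1
  refine ⟨2 * z ^ 2 + |z| * K + (2 + |z| * M), fun x hx0 => ?_⟩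
  have hM0 : 0 ≤ M := (abs_nonneg _).trans (hM 0)
  rcases le_or_gt |x| 1 with hx1 | hx1
  · have hmin : min 1 (x ^ 2) = x ^ 2 := min_eq_right (by nlinarith [sq_abs x, abs_nonneg x])
    have hsplit : levyIntegrand c z x
        = (cexp (I * z * x) - 1 - I * z * x) + I * z * ↑(x - c x) := by
      rw [levyIntegrand, ofReal_sub]; ring
    have htaylor : ‖cexp (I * z * x) - 1 - I * z * x‖ ≤ 2 * (z * x) ^ 2 := by
      simpa [mul_assoc] using norm_cexp_I_mul_sub_one_sub_le (z * x)
    have hdrift : ‖I * (z : ℂ) * ↑(x - c x)‖ ≤ |z| * (K * x ^ 2) := by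
      rw [norm_mul, norm_mul, Complex.norm_I, one_mul, Complex.norm_real, Complex.norm_real,
        Real.norm_eq_abs, Real.norm_eq_abs, abs_sub_comm]
      gcongr
      exact hK x hx0 hx1
    rw [hmin, hsplit]
    calc _ ≤ 2 * (z * x) ^ 2 + |z| * (K * x ^ 2) :=
          (norm_add_le _ _).trans (add_le_add htaylor hdrift)
      _ ≤ _ := by nlinarith [mul_nonneg (add_nonneg zero_le_two (mul_nonneg (abs_nonneg z) hM0))
                    (sq_nonneg x)]
  · have hmin : min 1 (x ^ 2) = 1 := min_eq_left (by nlinarith [sq_abs x, abs_nonneg x])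
    have hexp : ‖cexp (I * z * x)‖ = 1 := by
      rw [Complex.norm_exp]; simp
    have hdrift : ‖I * (z : ℂ) * c x‖ ≤ |z| * M := by
      rw [norm_mul, norm_mul, Complex.norm_I, one_mul, Complex.norm_real, Complex.norm_real,
        Real.norm_eq_abs, Real.norm_eq_abs]
      gcongr
      exact hM x
    rw [hmin, mul_one]
    calc ‖levyIntegrand c z x‖ ≤ ‖cexp (I * z * x)‖ + ‖(1 : ℂ)‖ + ‖I * (z : ℂ) * c x‖ :=
          (norm_sub_le _ _).trans (add_le_add_left (norm_sub_le _ _) _)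
      _ ≤ _ := by rw [hexp, norm_one]; nlinarith [abs_nonneg z, sq_nonneg z]

lemma integrable_min_one_sq {ν : Measure ℝ} (h : ∫⁻ x, ENNReal.ofReal (min 1 (x ^ 2)) ∂ν < ⊤) :
    Integrable (fun x => min 1 (x ^ 2)) ν :=
  ⟨by fun_prop, (hasFiniteIntegral_iff_ofReal (ae_of_all _ fun x => by positivity)).mpr h⟩

lemma IsRepFn.integrable_levyIntegrand {c : ℝ → ℝ} (hc : IsRepFn c) {ν : Measure ℝ}
    (h0 : ν {0} = 0) (h : ∫⁻ x, ENNReal.ofReal (min 1 (x ^ 2)) ∂ν < ⊤) (z : ℝ) :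
    Integrable (levyIntegrand c z) ν := by
  obtain ⟨K, hK⟩ := hc.exists_norm_levyIntegrand_le z
  have hmeas : Measurable (levyIntegrand c z) := by
    unfold levyIntegrand; have := hc.1; fun_prop
  refine ((integrable_min_one_sq h).const_mul K).mono' hmeas.aestronglyMeasurable ?_
  filter_upwards [measure_eq_zero_iff_ae_notMem.mp h0] with x hx
  exact hK x hx

lemma re_levyIntegrand (c : ℝ → ℝ) (z x : ℝ) : (levyIntegrand c z x).re = Real.cos (z * x) - 1 := by
  have hexp : I * z * x = ((z * x : ℝ) : ℂ) * I := by push_cast; ring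
  rw [levyIntegrand, hexp, Complex.sub_re, Complex.sub_re, Complex.exp_ofReal_mul_I_re]
  simp

lemma lintegral_one_sub_cos_eq_neg_re_lkInt {c : ℝ → ℝ} {ν : Measure ℝ} {z : ℝ}
    (hint : Integrable (levyIntegrand c z) ν) :
    ∫⁻ x, ENNReal.ofReal (1 - Real.cos (z * x)) ∂ν = ENNReal.ofReal (-(lkInt c ν z).re) := by
  have hre : ∫ x, (levyIntegrand c z x).re ∂ν = (lkInt c ν z).re := integral_re hint
  simp only [re_levyIntegrand] at hre
  rw [← ofReal_integral_eq_lintegral_ofReal (hint.re.neg.congr (ae_of_all _ fun x => by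
    simp [re_levyIntegrand]))
    (ae_of_all _ fun x => by simp [Real.cos_le_one]), ← hre, ← integral_neg]
  simp

lemma charFn_eq_charFun (μ : Measure ℝ) : charFn μ = charFun μ := by
  ext z
  simp only [charFn, charFun_apply_real]
  congr with x
  ring_nf

lemma HasTriplet.lintegral_min_one_sq_lt_top {c : ℝ → ℝ} {μ : Measure ℝ} {a γ : ℝ}
    {νp νm : Measure ℝ} (h : HasTriplet c μ a νp νm γ) :
    ∫⁻ x, ENNReal.ofReal (min 1 (x ^ 2)) ∂νp < ⊤ ∧
      ∫⁻ x, ENNReal.ofReal (min 1 (x ^ 2)) ∂νm < ⊤ := by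
  simpa [lintegral_add_measure] using h.2.2.2.1

lemma HasTriplet.lintegral_one_sub_cos_le {c : ℝ → ℝ} (hc : IsRepFn c) {μ : Measure ℝ}
    [IsProbabilityMeasure μ] {γ : ℝ} {νp νm : Measure ℝ} (h : HasTriplet c μ 0 νp νm γ) (z : ℝ) :
    ∫⁻ x, ENNReal.ofReal (1 - Real.cos (z * x)) ∂νm
      ≤ ∫⁻ x, ENNReal.ofReal (1 - Real.cos (z * x)) ∂νp := by
  obtain ⟨hfp, hfm⟩ := h.lintegral_min_one_sq_lt_top
  rw [lintegral_one_sub_cos_eq_neg_re_lkInt (hc.integrable_levyIntegrand h.2.2.1 hfm z),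
    lintegral_one_sub_cos_eq_neg_re_lkInt (hc.integrable_levyIntegrand h.2.1 hfp z)]
  have hnorm : ‖charFn μ z‖ ≤ 1 := by rw [charFn_eq_charFun]; exact norm_charFun_le_one z
  rw [h.2.2.2.2 z, Complex.norm_exp, Real.exp_le_one_iff] at hnorm
  have hre : (lkInt c νp z).re ≤ (lkInt c νm z).re := by simpa using hnorm
  exact ENNReal.ofReal_le_ofReal (neg_le_neg hre)

lemma sigmaFinite_of_lintegral_lt_top {α : Type*} [MeasurableSpace α] {μ : Measure α}
    {f : α → ENNReal} (hf : Measurable f) (hf0 : ∀ᵐ x ∂μ, f x ≠ 0) (hfint : ∫⁻ x, f x ∂μ < ⊤) :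
    SigmaFinite μ := by
  have : IsFiniteMeasure (μ.withDensity f) := isFiniteMeasure_withDensity hfint.ne
  rw [← withDensity_inv_same hf hf0 (ae_lt_top hf hfint.ne |>.mono fun _ => ne_of_lt)]
  exact SigmaFinite.withDensity_of_ne_top <| (ae_withDensity_iff hf).mpr <|
    ae_of_all _ fun _ => ENNReal.inv_ne_top.mpr

lemma sigmaFinite_of_lintegral_min_one_sq_lt_top {ν : Measure ℝ} (h0 : ν {0} = 0)
    (h : ∫⁻ x, ENNReal.ofReal (min 1 (x ^ 2)) ∂ν < ⊤) : SigmaFinite ν :=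
  sigmaFinite_of_lintegral_lt_top (by fun_prop)
    (by filter_upwards [measure_eq_zero_iff_ae_notMem.mp h0] with x hx; simpa using hx) h

lemma integral_cos_mul_eq_re_charFun (μ : Measure ℝ) [IsFiniteMeasure μ] (x : ℝ) :
    ∫ z, Real.cos (z * x) ∂μ = (charFun μ x).re := by
  have hexp : ∀ z : ℝ, cexp (x * z * I) = cexp ((z * x : ℝ) * I) := fun z => by
    push_cast; ring_nf
  have hint : Integrable (fun z : ℝ => cexp (x * z * I)) μ :=
    (integrable_const (1 : ℂ)).mono (by fun_prop)
      (ae_of_all _ fun z => by rw [hexp, Complex.norm_exp_ofReal_mul_I]; simp)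
  rw [charFun_apply_real, ← RCLike.re_to_complex, ← integral_re hint]
  simp only [hexp, RCLike.re_to_complex, Complex.exp_ofReal_mul_I_re]

lemma lintegral_one_sub_cos_gaussianReal (v : ℝ≥0) (x : ℝ) :
    ∫⁻ z, ENNReal.ofReal (1 - Real.cos (z * x)) ∂gaussianReal 0 v
      = ENNReal.ofReal (1 - Real.exp (-(v * x ^ 2 / 2))) := by
  have hcos : ∫ z, Real.cos (z * x) ∂gaussianReal 0 v = Real.exp (-(v * x ^ 2 / 2)) := by
    rw [integral_cos_mul_eq_re_charFun, charFun_gaussianReal]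
    simp only [ofReal_zero, mul_zero, zero_mul, zero_sub]
    exact_mod_cast Complex.exp_ofReal_re _
  have hcos_int : Integrable (fun z => Real.cos (z * x)) (gaussianReal 0 v) :=
    .of_bound (by fun_prop) 1 (ae_of_all _ fun z => Real.abs_cos_le_one _)
  have hint : Integrable (fun z => 1 - Real.cos (z * x)) (gaussianReal 0 v) :=
    (integrable_const 1).sub hcos_int
  rw [← ofReal_integral_eq_lintegral_ofReal hint
    (ae_of_all _ fun z => by simp [Real.cos_le_one]), integral_sub (integrable_const 1) hcos_int,
    hcos]
  simp

lemma lintegral_lintegral_one_sub_cos_gaussianReal (ν : Measure ℝ) [SFinite ν] (v : ℝ≥0) :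
    ∫⁻ z, ∫⁻ x, ENNReal.ofReal (1 - Real.cos (z * x)) ∂ν ∂gaussianReal 0 v
      = ∫⁻ x, ENNReal.ofReal (1 - Real.exp (-(v * x ^ 2 / 2))) ∂ν := by
  rw [lintegral_lintegral_swap (by fun_prop)]
  simp_rw [lintegral_one_sub_cos_gaussianReal]

lemma tendsto_lintegral_one_sub_exp_neg_mul_sq {ν : Measure ℝ} (h0 : ν {0} = 0) :
    Tendsto (fun n : ℕ => ∫⁻ x, ENNReal.ofReal (1 - Real.exp (-(n * x ^ 2 / 2))) ∂ν) atTop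
      (𝓝 (ν Set.univ)) := by
  rw [← lintegral_one]
  refine lintegral_tendsto_of_tendsto_of_monotone (fun n => by fun_prop)
    (ae_of_all _ fun x m n hmn => by dsimp only; gcongr) ?_
  filter_upwards [measure_eq_zero_iff_ae_notMem.mp h0] with x hx
  have hx2 : 0 < x ^ 2 / 2 := by simp only [Set.mem_singleton_iff] at hx; positivity
  have hexp : Tendsto (fun n : ℕ => Real.exp (-(n * x ^ 2 / 2))) atTop (𝓝 0) := by
    simp_rw [mul_div_assoc]
    exact Real.tendsto_exp_neg_atTop_nhds_zero.comp
      (tendsto_natCast_atTop_atTop.atTop_mul_const hx2)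
  simpa using ENNReal.tendsto_ofReal (hexp.const_sub 1)

end

/-- if the Gaussian variance is zero, then ν⁺(ℝ) ≥ ν⁻(ℝ). -/
theorem stmt4 (c : ℝ → ℝ) (hc : IsRepFn c) (μ : Measure ℝ) [IsProbabilityMeasure μ]
    (γ : ℝ) (νp νm : Measure ℝ) (h : HasTriplet c μ 0 νp νm γ) :
    νm Set.univ ≤ νp Set.univ := by
  have ⟨_, h0p, h0m, _⟩ := h
  obtain ⟨hfp, hfm⟩ := h.lintegral_min_one_sq_lt_top
  have := sigmaFinite_of_lintegral_min_one_sq_lt_top h0p hfp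
  have := sigmaFinite_of_lintegral_min_one_sq_lt_top h0m hfm
  refine le_of_tendsto_of_tendsto' (tendsto_lintegral_one_sub_exp_neg_mul_sq h0m)
    (tendsto_lintegral_one_sub_exp_neg_mul_sq h0p) fun n => ?_
  have hgauss (ν : Measure ℝ) [SFinite ν] := lintegral_lintegral_one_sub_cos_gaussianReal ν n
  simp only [NNReal.coe_natCast] at hgauss
  rw [← hgauss, ← hgauss]
  exact lintegral_mono fun z => h.lintegral_one_sub_cos_le hc z
end
end

section
/- Let μ = ∑_{j=0}^n a_j δ_j be a probability distribution on {0,1,…,n} with a_n > 0. Then the following are equivalent: (i) μ is quasi-infinitely divisible; (ii) μ̂(z) ≠ 0 for all z ∈ ℝ; (iii) the polynomial w ↦ ∑_{j=0}^n a_j w^j has no roots on the unit circle {w ∈ ℂ : |w| = 1}. -/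
/-!
Over ℂ, `f w = ∑ a_j w^j` is a constant times `∏ (w - α)` over its roots, none of which lies on
the unit circle. For `|α| < 1` write `e^{iz} - α = e^{iz} (1 - α e^{-iz})`, for `|α| > 1` write
`e^{iz} - α = -α (1 - α⁻¹ e^{iz})`; in both cases the logarithm of the last factor is an absolutely
convergent series in the `e^{imz}`, `m ∈ ℤ`. Multiplying over the roots and normalising by
`f 1 = 1` gives `μ̂ z = exp (i r z + ∑ b_m (e^{imz} - 1))` with `(b_m)` summable and `b_0 = 0`;
the `b_m` are real because the roots are closed under conjugation. Since
`g_c(m, z) = e^{imz} - 1 - i z c(m)` for integers `m ≠ 0`, this is the representation of `μ` with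
`ζ = ∑ b_m δ_m`.
-/

open MeasureTheory Complex Filter

noncomputable section

open Polynomial ComplexConjugate

theorem norm_mul_exp_I_mul_ofReal (v : ℂ) (z : ℝ) : ‖v * exp (I * z)‖ = ‖v‖ := by
  rw [norm_mul, mul_comm I, norm_exp_ofReal_mul_I, mul_one]

theorem norm_exp_I_mul_ofReal_mul_intCast (z : ℝ) (m : ℤ) : ‖exp (I * z * m)‖ = 1 := by
  rw [show I * z * m = ((z * m : ℝ) : ℂ) * I by push_cast; ring, norm_exp_ofReal_mul_I]

theorem one_sub_ne_zero_of_norm_lt_one {u : ℂ} (hu : ‖u‖ < 1) : 1 - u ≠ 0 := by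
  rw [sub_ne_zero]
  rintro rfl
  simp at hu

theorem HasSum.int_toNat {E : Type*} [AddCommMonoid E] [TopologicalSpace E] {f : ℕ → E} {s : E}
    (hf : HasSum f s) (h0 : f 0 = 0) : HasSum (fun m : ℤ => f m.toNat) s := by
  refine (Function.Injective.hasSum_iff Nat.cast_injective fun m hm => ?_).mp ?_
  · rw [Int.toNat_eq_zero.mpr (not_lt.mp fun h => hm ⟨m.toNat, Int.toNat_of_nonneg h.le⟩), h0]
  · simpa [Function.comp_def] using hf

theorem hasSum_log_one_sub_mul_exp {v : ℂ} (hv : ‖v‖ < 1) (z : ℝ) :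
    HasSum (fun m : ℤ => -(v ^ m.toNat / m.toNat) * exp (I * z * m))
      (log (1 - v * exp (I * z))) := by
  have hu : ‖v * exp (I * z)‖ < 1 := by rwa [norm_mul_exp_I_mul_ofReal]
  rw [← neg_neg (log _)]
  refine HasSum.congr_fun ((hasSum_taylorSeries_neg_log hu).neg.int_toNat (by simp)) fun m => ?_
  obtain ⟨k, rfl | rfl⟩ := Int.eq_nat_or_neg m
  · simp [mul_pow, ← exp_nat_mul, mul_comm, mul_assoc, div_mul_eq_mul_div]
  · simp [Int.toNat_eq_zero.mpr (neg_nonpos.mpr (Int.natCast_nonneg k))]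

-- The Taylor coefficients of `log (1 - α e^{-iz})` (if `|α| < 1`) or `log (1 - α⁻¹ e^{iz})`
-- (if `|α| > 1`). Since `x / 0 = 0`, the formula gives `0` at `m = 0` and on the unused half-line.
def rootCoeff (α : ℂ) (m : ℤ) : ℂ :=
  if ‖α‖ < 1 then -(α ^ (-m).toNat / (-m).toNat) else -(α⁻¹ ^ m.toNat / m.toNat)

def HasLogFourier (F : ℝ → ℂ) (β : ℤ → ℂ) : Prop :=
  ∃ K : ℂ, ∃ r : ℕ, ∀ z : ℝ, ∃ L : ℂ,
    HasSum (fun m : ℤ => β m * exp (I * z * m)) L ∧ F z = K * exp (I * r * z + L)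

namespace HasLogFourier

theorem const (K : ℂ) : HasLogFourier (fun _ => K) 0 :=
  ⟨K, 0, fun _ => ⟨0, by simp, by simp⟩⟩

theorem mul {F G : ℝ → ℂ} {β γ : ℤ → ℂ} (hF : HasLogFourier F β) (hG : HasLogFourier G γ) :
    HasLogFourier (fun z => F z * G z) (β + γ) := by
  obtain ⟨K, r, hF⟩ := hF
  obtain ⟨K', r', hG⟩ := hG
  refine ⟨K * K', r + r', fun z => ?_⟩
  obtain ⟨L, hL, hFz⟩ := hF z
  obtain ⟨L', hL', hGz⟩ := hG z
  refine ⟨L + L', by simpa [add_mul] using hL.add hL', ?_⟩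
  change F z * G z = _
  rw [hFz, hGz, mul_mul_mul_comm, ← exp_add]
  push_cast
  ring_nf

theorem multiset_prod {ι : Type*} (s : Multiset ι) {F : ι → ℝ → ℂ} {β : ι → ℤ → ℂ}
    (h : ∀ i ∈ s, HasLogFourier (F i) (β i)) :
    HasLogFourier (fun z => (s.map (F · z)).prod) (fun m => (s.map (β · m)).sum) := by
  induction s using Multiset.induction_on with
  | empty => exact const 1
  | cons i s ih =>
    simp only [Multiset.map_cons, Multiset.prod_cons, Multiset.sum_cons]
    exact (h i (s.mem_cons_self i)).mul (ih fun j hj => h j (Multiset.mem_cons_of_mem hj))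

theorem summable {F : ℝ → ℂ} {β : ℤ → ℂ} (h : HasLogFourier F β) : Summable β := by
  obtain ⟨_, _, hF⟩ := h
  obtain ⟨L, hL, -⟩ := hF 0
  simpa using hL.summable

theorem eq_exp_tsum {F : ℝ → ℂ} {β : ℤ → ℂ} (h : HasLogFourier F β) (h0 : F 0 = 1) :
    ∃ r : ℕ, ∀ z : ℝ, F z = exp (I * r * z + ∑' m : ℤ, β m * (exp (I * z * m) - 1)) := by
  obtain ⟨K, r, h⟩ := h
  obtain ⟨L₀, hL₀, hF₀⟩ := h 0
  refine ⟨r, fun z => ?_⟩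
  obtain ⟨L, hL, hFz⟩ := h z
  have hsum : ∑' m : ℤ, β m * (exp (I * z * m) - 1) = L - L₀ := by
    simpa [mul_sub] using (hL.sub (by simpa using hL₀)).tsum_eq
  have hK : K * exp L₀ = 1 := by simpa using hF₀.symm.trans h0
  rw [hFz, hsum, ← one_mul (exp (_ + (L - L₀))), ← hK, mul_assoc K, ← exp_add]
  ring_nf

end HasLogFourier

theorem hasLogFourier_exp_sub {α : ℂ} (hα : ‖α‖ ≠ 1) :
    HasLogFourier (fun z => exp (I * z) - α) (rootCoeff α) := by
  by_cases hin : ‖α‖ < 1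
  · refine ⟨1, 1, fun z => ⟨log (1 - α * exp (I * ↑(-z))), ?_, ?_⟩⟩
    · rw [← (Equiv.neg ℤ).hasSum_iff]
      convert hasSum_log_one_sub_mul_exp hin (-z) using 2 with m
      simp [rootCoeff, hin]
    · have hu : ‖α * exp (I * ↑(-z))‖ < 1 := by rwa [norm_mul_exp_I_mul_ofReal]
      have hinv : exp (I * z) * exp (I * ↑(-z)) = 1 := by rw [← exp_add]; simp
      rw [exp_add, exp_log (one_sub_ne_zero_of_norm_lt_one hu), Nat.cast_one, mul_one]
      linear_combination α * hinv
  · have hout : ‖α⁻¹‖ < 1 := by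
      rw [norm_inv]; exact inv_lt_one_of_one_lt₀ (lt_of_le_of_ne (not_lt.mp hin) (Ne.symm hα))
    refine ⟨-α, 0, fun z => ⟨log (1 - α⁻¹ * exp (I * z)), ?_, ?_⟩⟩
    · simpa [rootCoeff, hin] using hasSum_log_one_sub_mul_exp hout z
    · have hu : ‖α⁻¹ * exp (I * z)‖ < 1 := by rwa [norm_mul_exp_I_mul_ofReal]
      have hα0 : α ≠ 0 := by rintro rfl; simp at hin
      simp only [Nat.cast_zero, mul_zero, zero_mul, zero_add]
      rw [exp_log (one_sub_ne_zero_of_norm_lt_one hu)]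
      field_simp
      ring

theorem rootCoeff_zero (α : ℂ) : rootCoeff α 0 = 0 := by
  simp [rootCoeff]

theorem conj_rootCoeff (α : ℂ) (m : ℤ) : conj (rootCoeff α m) = rootCoeff (conj α) m := by
  simp only [rootCoeff, norm_conj]
  split_ifs <;> simp

theorem aroots_map_conj (P : ℝ[X]) : (P.aroots ℂ).map conj = P.aroots ℂ := by
  rw [aroots, ← (IsAlgClosed.splits _).roots_map, Polynomial.map_map,
    show (conj : ℂ →+* ℂ).comp (algebraMap ℝ ℂ) = algebraMap ℝ ℂ from RingHom.ext conj_ofReal]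

theorem exists_aeval_exp_eq_exp_tsum (P : ℝ[X]) (h1 : P.eval 1 = 1)
    (hP : ∀ w : ℂ, ‖w‖ = 1 → aeval w P ≠ 0) :
    ∃ r : ℕ, ∃ b : ℤ → ℝ, Summable b ∧ b 0 = 0 ∧ ∀ z : ℝ,
      aeval (exp (I * z)) P = exp (I * r * z + ∑' m : ℤ, b m * (exp (I * z * m) - 1)) := by
  set B : ℤ → ℂ := fun m => ((P.aroots ℂ).map (rootCoeff · m)).sum with hB
  have hF : HasLogFourier (fun z => aeval (exp (I * z)) P) B := by
    have hroots : ∀ α ∈ P.aroots ℂ, ‖α‖ ≠ 1 := fun α hα h => hP α h (mem_aroots.mp hα).2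
    simpa [(IsAlgClosed.splits _).aeval_eq_prod_aroots] using
      (HasLogFourier.const (algebraMap ℝ ℂ P.leadingCoeff)).mul
        (HasLogFourier.multiset_prod _ fun α hα => hasLogFourier_exp_sub (hroots α hα))
  obtain ⟨r, hr⟩ := hF.eq_exp_tsum (by simp [aeval_def, eval₂_at_one, h1])
  have hreal : ∀ m, ((B m).re : ℂ) = B m := fun m => conj_eq_iff_re.mp <| by
    simp only [hB, map_multiset_sum, Multiset.map_map]
    nth_rw 2 [← aroots_map_conj]
    rw [Multiset.map_map]
    exact congrArg _ (Multiset.map_congr rfl fun α _ => conj_rootCoeff α m)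
  refine ⟨r, fun m => (B m).re, reCLM.summable hF.summable, by simp [hB, rootCoeff_zero],
    fun z => by simpa [hreal] using hr z⟩

-- `ENNReal.ofReal` sends negative masses to `0`, so `intMeasure b` and `intMeasure (-b)` are the
-- positive and negative parts of `∑ b_m δ_m`.
def intMeasure (d : ℤ → ℝ) : Measure ℝ :=
  Measure.sum fun m => ENNReal.ofReal (d m) • Measure.dirac (m : ℝ)

theorem isFiniteMeasure_intMeasure {d : ℤ → ℝ} (hd : Summable d) :
    IsFiniteMeasure (intMeasure d) := by
  constructor
  rw [intMeasure, Measure.sum_apply _ MeasurableSet.univ]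
  simp only [Measure.smul_apply, measure_univ, smul_eq_mul, mul_one]
  calc ∑' m, ENNReal.ofReal (d m) ≤ ∑' m, ENNReal.ofReal |d m| :=
        ENNReal.tsum_le_tsum fun m => ENNReal.ofReal_le_ofReal (le_abs_self _)
    _ = ENNReal.ofReal (∑' m, |d m|) :=
        (ENNReal.ofReal_tsum_of_nonneg (fun _ => abs_nonneg _) hd.abs).symm
    _ < ⊤ := ENNReal.ofReal_lt_top

theorem mutuallySingular_intMeasure_neg (d : ℤ → ℝ) :
    intMeasure d ⟂ₘ intMeasure (-d) := by
  refine Measure.MutuallySingular.sum_left.mpr fun i =>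
    Measure.MutuallySingular.sum_right.mpr fun j => ?_
  by_cases hij : i = j
  · subst hij
    rcases le_total (d i) 0 with h | h
    · simp [ENNReal.ofReal_of_nonpos h]
    · simp [ENNReal.ofReal_of_nonpos (neg_nonpos.mpr h)]
  · have hdirac : Measure.dirac (i : ℝ) ⟂ₘ Measure.dirac (j : ℝ) :=
      ⟨{(i : ℝ)}ᶜ, (measurableSet_singleton _).compl, by simp, by simp [hij]⟩
    exact ((hdirac.smul _).symm.smul _).symm

theorem integral_intMeasure {E : Type*} [NormedAddCommGroup E] [NormedSpace ℝ E] [CompleteSpace E]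
    {d : ℤ → ℝ} (hd : Summable d) {g : ℝ → E} (hg : StronglyMeasurable g) {C : ℝ}
    (hC : ∀ m : ℤ, ‖g m‖ ≤ C) :
    ∫ x, g x ∂intMeasure d = ∑' m : ℤ, max (d m) 0 • g m := by
  have := isFiniteMeasure_intMeasure hd
  have hint : Integrable g (intMeasure d) := by
    refine Integrable.of_bound hg.aestronglyMeasurable C ?_
    rw [intMeasure, Measure.ae_sum_iff]
    exact fun m => Measure.ae_smul_measure (by rw [ae_dirac_eq]; exact hC m) _
  rw [intMeasure, integral_sum_measure hint]
  simp [integral_smul_measure, ENNReal.toReal_ofReal']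

theorem measurable_gKer {c : ℝ → ℝ} (hc : Measurable c) (z : ℝ) :
    Measurable fun x => gKer c x z := by
  unfold gKer
  refine Measurable.ite (measurableSet_singleton 0) measurable_const ?_
  fun_prop

theorem gKer_intCast (c : ℝ → ℝ) (z : ℝ) {m : ℤ} (hm : m ≠ 0) :
    gKer c m z = exp (I * z * m) - 1 - I * z * c m := by
  have hm1 : 1 ≤ (m : ℝ) ^ 2 :=
    (one_le_sq_iff_one_le_abs _).mpr (by exact_mod_cast Int.one_le_abs hm)
  simp [gKer, hm, min_eq_left hm1]

theorem norm_gKer_intCast_le {c : ℝ → ℝ} {M : ℝ} (hM : ∀ x, |c x| ≤ M) (z : ℝ) (m : ℤ) :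
    ‖gKer c m z‖ ≤ z ^ 2 / 2 + 2 + |z| * M := by
  have hzM : 0 ≤ |z| * M := mul_nonneg (abs_nonneg z) ((abs_nonneg _).trans (hM 0))
  rcases eq_or_ne m 0 with rfl | hm
  · simp only [gKer, Int.cast_zero, if_true, norm_div, norm_neg, norm_pow, norm_real,
      Real.norm_eq_abs, sq_abs, RCLike.norm_ofNat]
    linarith
  · rw [gKer_intCast c z hm]
    calc ‖exp (I * z * m) - 1 - I * z * c m‖ ≤ ‖exp (I * z * m)‖ + 1 + |z| * |c m| := by
          refine (norm_sub_le _ _).trans (add_le_add ((norm_sub_le _ _).trans (by simp)) ?_)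
          simp
      _ ≤ z ^ 2 / 2 + 2 + |z| * M := by
          rw [norm_exp_I_mul_ofReal_mul_intCast]
          nlinarith [mul_le_mul_of_nonneg_left (hM m) (abs_nonneg z), sq_nonneg z]

theorem isQID_of_charFn_eq_exp_tsum {c : ℝ → ℝ} (hc : Measurable c) {M : ℝ}
    (hM : ∀ x, |c x| ≤ M) {μ : Measure ℝ} {γ : ℝ} {b : ℤ → ℝ} (hb : Summable b) (hb0 : b 0 = 0)
    (hμ : ∀ z : ℝ, charFn μ z = exp (I * γ * z + ∑' m : ℤ, b m * (exp (I * z * m) - 1))) :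
    IsQID c μ := by
  refine ⟨γ + ∑' m : ℤ, b m * c m, intMeasure b, intMeasure (-b), isFiniteMeasure_intMeasure hb,
    isFiniteMeasure_intMeasure hb.neg, mutuallySingular_intMeasure_neg b, fun z => ?_⟩
  have hg := (measurable_gKer hc z).stronglyMeasurable
  rw [hμ z, integral_intMeasure hb hg (norm_gKer_intCast_le hM z),
    integral_intMeasure (d := -b) hb.neg hg (norm_gKer_intCast_le hM z)]
  have hsplit : ∀ m : ℤ, max (b m) 0 • gKer c m z - max ((-b) m) 0 • gKer c m z
      = b m * (exp (I * z * m) - 1) - I * z * (b m * c m : ℝ) := by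
    intro m
    rw [← sub_smul, Pi.neg_apply, max_zero_sub_max_neg_zero_eq_self]
    rcases eq_or_ne m 0 with rfl | hm
    · simp [hb0]
    · rw [gKer_intCast c z hm, real_smul]
      push_cast
      ring
  have hexp : Summable fun m : ℤ => (b m : ℂ) * (exp (I * z * m) - 1) := by
    refine hb.abs.mul_right 2 |>.of_norm_bounded fun m => ?_
    rw [norm_mul, norm_real, Real.norm_eq_abs]
    gcongr
    exact (norm_sub_le _ _).trans (by rw [norm_exp_I_mul_ofReal_mul_intCast, norm_one]; norm_num)
  have hbc : Summable fun m : ℤ => b m * c m := by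
    refine hb.abs.mul_right M |>.of_norm_bounded fun m => ?_
    rw [norm_mul, Real.norm_eq_abs]
    exact mul_le_mul_of_nonneg_left (hM m) (abs_nonneg _)
  have hgb : ∀ d : ℤ → ℝ, Summable d → Summable fun m => max (d m) 0 • gKer c m z := by
    refine fun d hd => hd.abs.mul_right (z ^ 2 / 2 + 2 + |z| * M) |>.of_norm_bounded fun m => ?_
    rw [norm_smul, Real.norm_eq_abs, abs_of_nonneg (le_max_right _ _)]
    exact mul_le_mul (max_le (le_abs_self _) (abs_nonneg _)) (norm_gKer_intCast_le hM z m)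
      (norm_nonneg _) (abs_nonneg _)
  rw [add_sub_assoc, ← (hgb b hb).tsum_sub (hgb (-b) hb.neg), tsum_congr hsplit,
    hexp.tsum_sub ((summable_ofReal.mpr hbc).mul_left (I * z)), tsum_mul_left, ← ofReal_tsum]
  congr 1
  push_cast
  ring

theorem charFn_sum_dirac (s : Finset ℕ) (a : ℕ → ℝ) (ha : ∀ j ∈ s, 0 ≤ a j) (z : ℝ) :
    charFn (∑ j ∈ s, ENNReal.ofReal (a j) • Measure.dirac (j : ℝ)) z =
      ∑ j ∈ s, (a j : ℂ) * exp (I * z) ^ j := by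
  rw [charFn, integral_finsetSum_measure fun j _ =>
    (integrable_dirac (by simp)).smul_measure ENNReal.ofReal_ne_top]
  refine Finset.sum_congr rfl fun j hj => ?_
  rw [integral_smul_measure, integral_dirac, ENNReal.toReal_ofReal (ha j hj), real_smul,
    ← exp_nat_mul]
  push_cast
  ring_nf

theorem stmt8_general (c : ℝ → ℝ) (hc : IsRepFn c) (n : ℕ) (a : ℕ → ℝ)
    (hnn : ∀ j, j ≤ n → 0 ≤ a j)
    (hsum : ∑ j ∈ Finset.range (n + 1), a j = 1)
    (μ : Measure ℝ)
    (hμ : μ = ∑ j ∈ Finset.range (n + 1), ENNReal.ofReal (a j) • Measure.dirac (j : ℝ)) :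
    List.TFAE [IsQID c μ,
      ∀ z : ℝ, charFn μ z ≠ 0,
      ∀ w : ℂ, ‖w‖ = 1 → ∑ j ∈ Finset.range (n + 1), (a j : ℂ) * w ^ j ≠ 0] := by
  set P : ℝ[X] := ∑ j ∈ Finset.range (n + 1), C (a j) * X ^ j
  have hP : ∀ w : ℂ, aeval w P = ∑ j ∈ Finset.range (n + 1), (a j : ℂ) * w ^ j := by simp [P]
  have hchar : ∀ z : ℝ, charFn μ z = aeval (exp (I * z)) P := fun z => by
    rw [hP, hμ, charFn_sum_dirac]
    exact fun j hj => hnn j (Nat.lt_succ_iff.mp (Finset.mem_range.mp hj))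
  tfae_have 1 → 2 := by
    rintro ⟨γ, ζp, ζm, -, -, -, hrep⟩ z
    rw [hrep z]
    exact exp_ne_zero _
  tfae_have 2 → 3 := by
    intro h w hw
    have hexp : exp (I * w.arg) = w := by simpa [hw, mul_comm I] using norm_mul_exp_arg_mul_I w
    simpa [hchar, hexp, hP] using h w.arg
  tfae_have 3 → 1 := by
    intro h
    obtain ⟨hcm, ⟨M, hM⟩, -⟩ := hc
    obtain ⟨r, b, hb, hb0, hexp⟩ :=
      exists_aeval_exp_eq_exp_tsum P (by simpa [P, eval_finsetSum] using hsum)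
        fun w hw => hP w ▸ h w hw
    exact isQID_of_charFn_eq_exp_tsum (γ := r) hcm hM hb hb0 fun z => by simp [hchar, hexp z]
  tfae_finish

/-- for μ = ∑_{j=0}^n a_j δ_j with a_n > 0, TFAE:
(i) μ is quasi-infinitely divisible; (ii) μ̂ has no zeroes;
(iii) the polynomial ∑ a_j w^j has no roots on the unit circle. -/
theorem stmt8 (c : ℝ → ℝ) (hc : IsRepFn c) (n : ℕ) (a : ℕ → ℝ)
    (hnn : ∀ j, j ≤ n → 0 ≤ a j) (han : 0 < a n)
    (hsum : ∑ j ∈ Finset.range (n + 1), a j = 1)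
    (μ : Measure ℝ)
    (hμ : μ = ∑ j ∈ Finset.range (n + 1), ENNReal.ofReal (a j) • Measure.dirac (j : ℝ)) :
    List.TFAE [IsQID c μ,
      ∀ z : ℝ, charFn μ z ≠ 0,
      ∀ w : ℂ, ‖w‖ = 1 → ∑ j ∈ Finset.range (n + 1), (a j : ℂ) * w ^ j ≠ 0] :=
  stmt8_general c hc n a hnn hsum μ hμ

end
end
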